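/- arXiv:1711.10805 — 5 statements merged into one kernel-verified Lean document; each statement's English description precedes it below -/
import Mathlib

section
/- The kernel of the Laplacian matrix of a finite directed multigraph with a global sink is one-dimensional and is spanned by a non-negative vector whose component at the sink is strictly positive. -/
/-- A finite directed multigraph without loops on `Fin (n+1)` with global sink `Fin.last n`. -/
structure SinkDigraph (n : ℕ) where
  e : Fin (n + 1) → Fin (n + 1) → ℕ
  loopless : ∀ i, e i i = 0
  sink_no_out : ∀ j, e (Fin.last n) j = 0
  path_to_sink : ∀ i, Relation.ReflTransGen (fun u v => 0 < e u v) i (Fin.last n)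

namespace SinkDigraph

variable {n : ℕ}

/-- Out-degree of a vertex. -/
def outDeg (G : SinkDigraph n) (i : Fin (n + 1)) : ℕ := ∑ j, G.e i j

/-- The (full) Laplacian matrix over ℤ. -/
def lap (G : SinkDigraph n) : Matrix (Fin (n + 1)) (Fin (n + 1)) ℤ :=
  Matrix.of fun i j => if i = j then (G.outDeg i : ℤ) else -(G.e i j : ℤ)

/-- The reduced Laplacian (rows/columns of the sink removed). -/
def redLap (G : SinkDigraph n) : Matrix (Fin n) (Fin n) ℤ :=
  Matrix.of fun i j => G.lap i.castSucc j.castSucc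

/-- The reduced Laplacian over ℚ. -/
def redLapQ (G : SinkDigraph n) : Matrix (Fin n) (Fin n) ℚ :=
  (G.redLap).map (Int.cast : ℤ → ℚ)

/-- A ℕ-script viewed as integer vector. -/
def natScript (σ : Fin n → ℕ) : Fin n → ℤ := fun i => (σ i : ℤ)

/-- Result of firing vertex `i` in configuration `a`. -/
def fire (G : SinkDigraph n) (a : Fin n → ℤ) (i : Fin n) : Fin n → ℤ :=
  fun j => a j - G.redLap i j

/-- Result of firing a sequence of vertices. -/
def applySeq (G : SinkDigraph n) : (Fin n → ℤ) → List (Fin n) → (Fin n → ℤ)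
  | a, [] => a
  | a, i :: s => G.applySeq (G.fire a i) s

/-- A firing sequence is legal from `a` if every fired vertex is active when fired. -/
def Legal (G : SinkDigraph n) : (Fin n → ℤ) → List (Fin n) → Prop
  | _, [] => True
  | a, i :: s => G.redLap i i ≤ a i ∧ G.Legal (G.fire a i) s

/-- The firing script of a firing sequence. -/
def script (s : List (Fin n)) : Fin n → ℤ := fun i => (s.count i : ℤ)

/-- A configuration is stable if it is non-negative and no vertex is active. -/
def IsStable (G : SinkDigraph n) (a : Fin n → ℤ) : Prop :=
  ∀ i, 0 ≤ a i ∧ a i < G.redLap i i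

/-- `b` is the stabilization of `a`. -/
def Stabilizes (G : SinkDigraph n) (a b : Fin n → ℤ) : Prop :=
  ∃ s : List (Fin n), G.Legal a s ∧ G.applySeq a s = b ∧ G.IsStable b

/-- The maximal stable configuration `c_max`. -/
def cmax (G : SinkDigraph n) : Fin n → ℤ := fun i => (G.outDeg i.castSucc : ℤ) - 1

/-- A stable configuration is critical if it is the stabilization of `c_max + c`
for some non-negative `c`. -/
def IsCritical (G : SinkDigraph n) (a : Fin n → ℤ) : Prop :=
  ∃ c : Fin n → ℤ, 0 ≤ c ∧ G.Stabilizes (G.cmax + c) a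

/-- `σΔ ≻ 0`, i.e. `σΔ` is non-negative and non-zero. -/
def GPositive (G : SinkDigraph n) (σ : Fin n → ℕ) : Prop :=
  0 ≤ Matrix.vecMul (natScript σ) G.redLap ∧ Matrix.vecMul (natScript σ) G.redLap ≠ 0

/-- Reachability along directed edges. -/
def Reach (G : SinkDigraph n) : Fin (n + 1) → Fin (n + 1) → Prop :=
  Relation.ReflTransGen (fun u v => 0 < G.e u v)

/-- A source component: a strongly connected component with no in-going edge from outside. -/
def IsSourceComponent (G : SinkDigraph n) (S : Set (Fin (n + 1))) : Prop :=
  (∃ i, S = {j | G.Reach i j ∧ G.Reach j i}) ∧ ∀ j ∉ S, ∀ k ∈ S, G.e j k = 0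

/-- A `G`-strongly positive script. -/
def GStronglyPositive (G : SinkDigraph n) (σ : Fin n → ℕ) : Prop :=
  G.GPositive σ ∧ ∀ S : Set (Fin (n + 1)), G.IsSourceComponent S →
    ∃ i : Fin n, i.castSucc ∈ S ∧ Matrix.vecMul (natScript σ) G.redLap i ≠ 0

/-- Linear equivalence of configurations. -/
def Equiv (G : SinkDigraph n) (a b : Fin n → ℤ) : Prop :=
  ∃ σ : Fin n → ℤ, b - a = Matrix.vecMul σ G.redLap

/-- The weight of a configuration. -/
def weight (a : Fin n → ℤ) : ℤ := ∑ i, a i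

/-- The energy (CFG) order: compare energy vectors `aΔ⁻¹` componentwise over ℚ. -/
def cfgLE (G : SinkDigraph n) (a b : Fin n → ℤ) : Prop :=
  Matrix.vecMul (fun i => (a i : ℚ)) (G.redLapQ)⁻¹ ≤
    Matrix.vecMul (fun i => (b i : ℚ)) (G.redLapQ)⁻¹

/-- A non-negative configuration is superstable if reverse-firing any nonzero ℕ-script
produces a negative component. -/
def IsSuperstable (G : SinkDigraph n) (a : Fin n → ℤ) : Prop :=
  0 ≤ a ∧ ∀ σ : Fin n → ℕ, σ ≠ 0 →
    ∃ i, a i - Matrix.vecMul (natScript σ) G.redLap i < 0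

end SinkDigraph

open SinkDigraph Matrix

namespace SinkDigraph

variable {n : ℕ}

lemma lap_last_row (G : SinkDigraph n) (k : Fin (n + 1)) : G.lap (Fin.last n) k = 0 := by
  have h : G.outDeg (Fin.last n) = 0 := by simp [outDeg, G.sink_no_out]
  by_cases hk : Fin.last n = k
  · subst hk; simp [lap, h]
  · simp [lap, hk, G.sink_no_out]

lemma mulVec_redLapQ (G : SinkDigraph n) (y : Fin n → ℚ) (i : Fin n) :
    G.redLapQ.mulVec y i =
      ∑ j : Fin (n + 1), (G.e i.castSucc j : ℚ) * (y i - (Fin.snoc y 0 : Fin (n + 1) → ℚ) j) := by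
  have hentry : ∀ j : Fin n, G.redLapQ i j =
      (if i = j then (G.outDeg i.castSucc : ℚ) else 0) - (G.e i.castSucc j.castSucc : ℚ) := by
    intro j
    simp only [redLapQ, redLap, lap, Matrix.map_apply, Matrix.of_apply]
    by_cases h : i = j
    · subst h; simp [G.loopless]
    · have : ¬ (i.castSucc = j.castSucc) := by simp [Fin.castSucc_inj, h]
      simp [this, h]
  have hout : (G.outDeg i.castSucc : ℚ) = ∑ j : Fin (n + 1), (G.e i.castSucc j : ℚ) := by
    simp [outDeg]
  calc G.redLapQ.mulVec y i
      = ∑ j : Fin n, G.redLapQ i j * y j := by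
        simp [Matrix.mulVec, dotProduct]
    _ = ∑ j : Fin n, ((if i = j then (G.outDeg i.castSucc : ℚ) else 0) * y j
          - (G.e i.castSucc j.castSucc : ℚ) * y j) := by
        refine Finset.sum_congr rfl fun j _ => ?_
        rw [hentry j]; ring
    _ = (G.outDeg i.castSucc : ℚ) * y i
          - ∑ j : Fin n, (G.e i.castSucc j.castSucc : ℚ) * y j := by
        rw [Finset.sum_sub_distrib]
        congr 1
        simp [Finset.sum_ite_eq, Finset.mem_univ]
    _ = ∑ j : Fin (n + 1), (G.e i.castSucc j : ℚ) * (y i - (Fin.snoc y 0 : Fin (n + 1) → ℚ) j) := by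
        rw [Fin.sum_univ_castSucc, hout, Fin.sum_univ_castSucc]
        simp only [Fin.snoc_castSucc, Fin.snoc_last, sub_zero, mul_sub,
          Finset.sum_sub_distrib, ← Finset.sum_mul, add_mul]
        ring

lemma nonpos_of_mulVec_eq_zero (G : SinkDigraph n) (y : Fin n → ℚ)
    (hy : G.redLapQ.mulVec y = 0) : ∀ i, y i ≤ 0 := by
  set yy : Fin (n + 1) → ℚ := Fin.snoc y 0 with hyy
  set M : ℚ := Finset.univ.sup' Finset.univ_nonempty yy with hM
  have hle : ∀ j, yy j ≤ M := fun j => Finset.le_sup' yy (Finset.mem_univ j)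
  have step : ∀ u v : Fin (n + 1), yy u = M → 0 < G.e u v → yy v = M := by
    intro u v hu he
    rcases Fin.eq_castSucc_or_eq_last u with ⟨i, rfl⟩ | rfl
    · have h0 : ∑ j : Fin (n + 1), (G.e i.castSucc j : ℚ) * (M - yy j) = 0 := by
        have := congrFun hy i
        rw [mulVec_redLapQ] at this
        have hyi : y i = M := by rw [← hu]; simp [hyy]
        simpa [hyi, hyy] using this
      have hterm : ∀ j ∈ Finset.univ, 0 ≤ (G.e i.castSucc j : ℚ) * (M - yy j) := by
        intro j _
        exact mul_nonneg (by positivity) (by linarith [hle j])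
      have := (Finset.sum_eq_zero_iff_of_nonneg hterm).mp h0 v (Finset.mem_univ v)
      have hene : (G.e i.castSucc v : ℚ) ≠ 0 := by exact_mod_cast he.ne'
      have : M - yy v = 0 := by
        rcases mul_eq_zero.mp this with h | h
        · exact absurd h hene
        · exact h
      linarith
    · exact absurd he (by simp [G.sink_no_out])
  obtain ⟨u₀, -, hu₀⟩ := Finset.exists_mem_eq_sup' (Finset.univ_nonempty (α := Fin (n + 1))) yy
  have prop : ∀ u v : Fin (n + 1), Relation.ReflTransGen (fun a b => 0 < G.e a b) u v →
      yy u = M → yy v = M := by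
    intro u v h
    induction h with
    | refl => exact id
    | tail _ hbc ih => exact fun hu => step _ _ (ih hu) hbc
  have hpath : yy (Fin.last n) = M := prop u₀ _ (G.path_to_sink u₀) hu₀.symm
  have hM0 : M = 0 := by rw [← hpath]; simp [hyy]
  intro i
  have := hle i.castSucc
  simpa [hyy, hM0] using this

lemma mulVec_injective0 (G : SinkDigraph n) (y : Fin n → ℚ)
    (hy : G.redLapQ.mulVec y = 0) : y = 0 := by
  have h1 := G.nonpos_of_mulVec_eq_zero y hy
  have h2 := G.nonpos_of_mulVec_eq_zero (-y) (by rw [Matrix.mulVec_neg, hy, neg_zero])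
  funext i
  have ha := h1 i
  have hb := h2 i
  simp only [Pi.neg_apply, neg_nonpos] at hb
  exact le_antisymm ha hb

lemma det_redLapQ_ne_zero (G : SinkDigraph n) : G.redLapQ.det ≠ 0 := by
  intro h
  obtain ⟨v, hv0, hv⟩ := (Matrix.exists_mulVec_eq_zero_iff).mpr h
  exact hv0 (G.mulVec_injective0 v hv)

lemma vecMul_redLapQ_eq_zero (G : SinkDigraph n) (w : Fin n → ℚ)
    (hw : Matrix.vecMul w G.redLapQ = 0) : w = 0 := by
  have hunit : IsUnit G.redLapQ.det := isUnit_iff_ne_zero.mpr G.det_redLapQ_ne_zero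
  have := congrArg (fun u => Matrix.vecMul u G.redLapQ⁻¹) hw
  simpa [Matrix.vecMul_vecMul, Matrix.mul_nonsing_inv _ hunit] using this

end SinkDigraph

theorem laplacian_kernel_spanned (n : ℕ) (G : SinkDigraph n) :
    ∃ v : Fin (n + 1) → ℚ, 0 ≤ v ∧ 0 < v (Fin.last n) ∧
      ∀ w : Fin (n + 1) → ℚ,
        Matrix.vecMul w ((G.lap).map (Int.cast : ℤ → ℚ)) = 0 ↔ ∃ c : ℚ, w = c • v := by
  set L : Matrix (Fin (n + 1)) (Fin (n + 1)) ℚ := (G.lap).map (Int.cast : ℤ → ℚ) with hL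
  have hlast : ∀ k, L (Fin.last n) k = 0 := by
    intro k; simp [hL, G.lap_last_row k]
  refine ⟨fun i => if i = Fin.last n then 1 else 0, ?_, by simp, fun w => ?_⟩
  · intro i; by_cases h : i = Fin.last n <;> simp [h]
  constructor
  · intro hw
    have hw' : Matrix.vecMul (fun i : Fin n => w i.castSucc) G.redLapQ = 0 := by
      funext j
      have h0 := congrFun hw j.castSucc
      have hexp : Matrix.vecMul w L j.castSucc =
          ∑ i : Fin (n + 1), w i * L i j.castSucc := by
        simp [Matrix.vecMul, dotProduct]
      rw [hexp, Fin.sum_univ_castSucc, hlast, mul_zero, add_zero] at h0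
      have : ∀ i : Fin n, L i.castSucc j.castSucc = G.redLapQ i j := by
        intro i; simp [hL, redLapQ, redLap]
      simp only [this] at h0
      simpa [Matrix.vecMul, dotProduct] using h0
    have hz := G.vecMul_redLapQ_eq_zero _ hw'
    refine ⟨w (Fin.last n), ?_⟩
    funext i
    rcases Fin.eq_castSucc_or_eq_last i with ⟨j, rfl⟩ | rfl
    · have : w j.castSucc = 0 := congrFun hz j
      simp [this, (Fin.castSucc_lt_last j).ne]
    · simp
  · rintro ⟨c, rfl⟩
    have hv : Matrix.vecMul (fun i : Fin (n + 1) => if i = Fin.last n then (1 : ℚ) else 0) L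
        = 0 := by
      funext j
      simp only [Matrix.vecMul, dotProduct]
      rw [Finset.sum_eq_single (Fin.last n)]
      · simp [hlast]
      · intro b _ hb; simp [hb]
      · simp
    rw [Matrix.smul_vecMul, hv, smul_zero]
end

section
/- The reduced Laplacian matrix of a finite directed multigraph with a global sink is non-singular, and all entries of its inverse are non-negative. -/
open SinkDigraph Matrix

open Matrix

namespace RedLapAux

/-- `walkLen G k i`: there is a walk of length `k` from `i` to the sink. -/
def walkLen {n : ℕ} (e : Fin (n + 1) → Fin (n + 1) → ℕ) : ℕ → Fin (n + 1) → Prop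
  | 0, i => i = Fin.last n
  | (k+1), i => ∃ j, 0 < e i j ∧ walkLen e k j

theorem exists_walkLen {n : ℕ} (e : Fin (n + 1) → Fin (n + 1) → ℕ) (i : Fin (n+1))
    (h : Relation.ReflTransGen (fun u v => 0 < e u v) i (Fin.last n)) :
    ∃ k, walkLen e k i := by
  induction h using Relation.ReflTransGen.head_induction_on with
  | refl => exact ⟨0, rfl⟩
  | head h' _ ih =>
    obtain ⟨k, hk⟩ := ih
    exact ⟨k + 1, _, h', hk⟩

/-- Key M-matrix lemma: nonpositive off-diagonal plus a positive vector with positive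
image forces solutions of `M *ᵥ y = b`, `b ≥ 0`, to be nonnegative. -/
theorem mmatrix_nonneg {n : ℕ} (M : Matrix (Fin n) (Fin n) ℚ)
    (hoff : ∀ i j, i ≠ j → M i j ≤ 0)
    (x : Fin n → ℚ) (hx : ∀ i, 0 < x i) (hMx : ∀ i, 0 < (M *ᵥ x) i)
    (y b : Fin n → ℚ) (hyb : M *ᵥ y = b) (hb : ∀ i, 0 ≤ b i) : ∀ i, 0 ≤ y i := by
  by_contra hcon
  push_neg at hcon
  obtain ⟨k, hk⟩ := hcon
  have hne : (Finset.univ : Finset (Fin n)).Nonempty := ⟨k, Finset.mem_univ k⟩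
  have ht : ∃ t : ℚ, (∀ j, -y j / x j ≤ t) ∧ ∃ k₀, t = -y k₀ / x k₀ := by
    refine ⟨Finset.univ.sup' hne (fun i => -y i / x i), fun j =>
      Finset.le_sup' (f := fun i => -y i / x i) (Finset.mem_univ j), ?_⟩
    obtain ⟨k₀, _, hk₀⟩ := Finset.exists_mem_eq_sup' hne (fun i => -y i / x i)
    exact ⟨k₀, hk₀⟩
  obtain ⟨t, htle, k₀, hk₀⟩ := ht
  have htpos : 0 < t := by
    have h1 := htle k
    have : 0 < -y k / x k := div_pos (by linarith) (hx k)
    linarith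
  set z : Fin n → ℚ := t • x + y with hz
  have hznn : ∀ j, 0 ≤ z j := by
    intro j
    have := (div_le_iff₀ (hx j)).1 (htle j)
    simp only [hz, Pi.add_apply, Pi.smul_apply, smul_eq_mul]
    linarith
  have hzk₀ : z k₀ = 0 := by
    have h2 : t * x k₀ = -y k₀ := (eq_div_iff (hx k₀).ne').1 hk₀
    simp only [hz, Pi.add_apply, Pi.smul_apply, smul_eq_mul]
    linarith
  have hpos : 0 < (M *ᵥ z) k₀ := by
    have h3 : M *ᵥ z = t • (M *ᵥ x) + b := by
      rw [hz, Matrix.mulVec_add, Matrix.mulVec_smul, hyb]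
    rw [h3]
    have := hMx k₀
    have := hb k₀
    simp only [Pi.add_apply, Pi.smul_apply, smul_eq_mul]
    nlinarith
  have hnonpos : (M *ᵥ z) k₀ ≤ 0 := by
    rw [Matrix.mulVec, dotProduct]
    apply Finset.sum_nonpos
    intro j _
    by_cases hj : j = k₀
    · subst hj; rw [hzk₀]; simp
    · exact mul_nonpos_of_nonpos_of_nonneg (hoff k₀ j (Ne.symm hj)) (hznn j)
  linarith



open Classical in
/-- Distance to the sink. -/
noncomputable def dist {n : ℕ} (e : Fin (n + 1) → Fin (n + 1) → ℕ)
    (hpath : ∀ i, Relation.ReflTransGen (fun u v => 0 < e u v) i (Fin.last n))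
    (i : Fin (n + 1)) : ℕ :=
  Nat.find (exists_walkLen e i (hpath i))

theorem dist_spec {n : ℕ} (e : Fin (n + 1) → Fin (n + 1) → ℕ)
    (hpath : ∀ i, Relation.ReflTransGen (fun u v => 0 < e u v) i (Fin.last n))
    (i : Fin (n + 1)) : walkLen e (dist e hpath i) i := by
  classical exact Nat.find_spec (exists_walkLen e i (hpath i))

theorem dist_last {n : ℕ} (e : Fin (n + 1) → Fin (n + 1) → ℕ)
    (hpath : ∀ i, Relation.ReflTransGen (fun u v => 0 < e u v) i (Fin.last n)) :
    dist e hpath (Fin.last n) = 0 := by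
  classical
  exact Nat.find_eq_zero _ |>.2 rfl

theorem dist_pos {n : ℕ} (e : Fin (n + 1) → Fin (n + 1) → ℕ)
    (hpath : ∀ i, Relation.ReflTransGen (fun u v => 0 < e u v) i (Fin.last n))
    {i : Fin (n + 1)} (hi : i ≠ Fin.last n) : 0 < dist e hpath i := by
  rcases Nat.eq_zero_or_pos (dist e hpath i) with h | h
  · exfalso
    have := dist_spec e hpath i
    rw [h] at this
    exact hi this
  · exact h

theorem dist_step {n : ℕ} (e : Fin (n + 1) → Fin (n + 1) → ℕ)
    (hpath : ∀ i, Relation.ReflTransGen (fun u v => 0 < e u v) i (Fin.last n))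
    {i : Fin (n + 1)} (hi : i ≠ Fin.last n) :
    ∃ j, 0 < e i j ∧ dist e hpath j < dist e hpath i := by
  classical
  have hs := dist_spec e hpath i
  have hpos := dist_pos e hpath hi
  obtain ⟨m, hm⟩ : ∃ m, dist e hpath i = m + 1 := ⟨dist e hpath i - 1, by omega⟩
  rw [hm] at hs
  obtain ⟨j, hj1, hj2⟩ := hs
  refine ⟨j, hj1, ?_⟩
  have : dist e hpath j ≤ m := Nat.find_le hj2
  omega



end RedLapAux

namespace RedLapAux

open SinkDigraph

variable {n : ℕ} (G : SinkDigraph n)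

/-- Explicit formula for entries of the reduced Laplacian over ℚ. -/
theorem redLapQ_apply (i j : Fin n) :
    G.redLapQ i j =
      (if i = j then (G.outDeg i.castSucc : ℚ) else 0) - (G.e i.castSucc j.castSucc : ℚ) := by
  simp only [redLapQ, redLap, lap, Matrix.map_apply, Matrix.of_apply]
  by_cases h : i = j
  · subst h
    simp [G.loopless]
  · have : ¬ (i.castSucc = j.castSucc) := by
      simp [Fin.castSucc_inj, h]
    simp [h, this]

theorem redLapQ_offdiag_nonpos (i j : Fin n) (hij : i ≠ j) : G.redLapQ i j ≤ 0 := by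
  rw [redLapQ_apply, if_neg hij]
  have : (0:ℚ) ≤ (G.e i.castSucc j.castSucc : ℚ) := Nat.cast_nonneg _
  linarith

/-- Total number of edges. -/
def totE : ℕ := ∑ i, ∑ j, G.e i j

/-- The key positive vector. -/
noncomputable def posVec : Fin (n + 1) → ℚ :=
  fun v => 1 - ((totE G : ℚ) + 2)⁻¹ ^ (dist G.e G.path_to_sink v)

theorem r_pos : 0 < ((totE G : ℚ) + 2)⁻¹ := by positivity

theorem r_lt_one : ((totE G : ℚ) + 2)⁻¹ < 1 := by
  rw [inv_lt_one_iff₀]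
  right
  have : (0:ℚ) ≤ (totE G : ℚ) := Nat.cast_nonneg _
  linarith

theorem posVec_last : posVec G (Fin.last n) = 0 := by
  simp [posVec, dist_last]

theorem posVec_pos (i : Fin n) : 0 < posVec G i.castSucc := by
  have h1 : 0 < dist G.e G.path_to_sink i.castSucc :=
    dist_pos _ _ (Fin.ne_last_of_lt (Fin.castSucc_lt_last i))
  have h2 : ((totE G : ℚ) + 2)⁻¹ ^ (dist G.e G.path_to_sink i.castSucc) ≤
      ((totE G : ℚ) + 2)⁻¹ ^ 1 :=
    pow_le_pow_of_le_one (le_of_lt (r_pos G)) (le_of_lt (r_lt_one G)) h1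
  rw [pow_one] at h2
  have h3 := r_lt_one G
  simp only [posVec]
  linarith

theorem row_le_totE (i : Fin (n+1)) : ∑ k, G.e i k ≤ totE G :=
  Finset.single_le_sum (f := fun v => ∑ k, G.e v k) (fun k _ => Nat.zero_le _)
    (Finset.mem_univ i)

theorem mulVec_posVec_eq (i : Fin n) :
    (G.redLapQ *ᵥ (fun j => posVec G j.castSucc)) i =
      ∑ v, (G.e i.castSucc v : ℚ) * (posVec G i.castSucc - posVec G v) := by
  rw [Matrix.mulVec, dotProduct]
  have hsum : ∀ j : Fin n, G.redLapQ i j * posVec G j.castSucc =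
      (if i = j then (G.outDeg i.castSucc : ℚ) * posVec G i.castSucc else 0)
        - (G.e i.castSucc j.castSucc : ℚ) * posVec G j.castSucc := by
    intro j
    rw [redLapQ_apply]
    by_cases h : i = j
    · subst h; simp [G.loopless]
    · simp only [if_neg h]; ring
  rw [Finset.sum_congr rfl (fun j _ => hsum j), Finset.sum_sub_distrib,
    Finset.sum_ite_eq Finset.univ i
      (fun j => (G.outDeg i.castSucc : ℚ) * posVec G i.castSucc)]
  simp only [Finset.mem_univ, if_pos]
  have hout : (G.outDeg i.castSucc : ℚ) = ∑ v, (G.e i.castSucc v : ℚ) := by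
    simp [outDeg]
  have hext : ∑ j : Fin n, (G.e i.castSucc j.castSucc : ℚ) * posVec G j.castSucc
      = ∑ v, (G.e i.castSucc v : ℚ) * posVec G v := by
    rw [Fin.sum_univ_castSucc (f := fun v => (G.e i.castSucc v : ℚ) * posVec G v)]
    rw [posVec_last]
    ring
  rw [hext, hout, Finset.sum_mul, ← Finset.sum_sub_distrib]
  exact Finset.sum_congr rfl (fun v _ => by ring)

theorem mulVec_posVec_pos (i : Fin n) :
    0 < (G.redLapQ *ᵥ (fun j => posVec G j.castSucc)) i := by
  rw [mulVec_posVec_eq]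
  set r := ((totE G : ℚ) + 2)⁻¹ with hr
  have hrpos : 0 < r := r_pos G
  have hi' : i.castSucc ≠ Fin.last n := Fin.ne_last_of_lt (Fin.castSucc_lt_last i)
  obtain ⟨js, hjs1, hjs2⟩ := dist_step G.e G.path_to_sink hi'
  obtain ⟨m, hm⟩ : ∃ m, dist G.e G.path_to_sink i.castSucc = m + 1 :=
    ⟨dist G.e G.path_to_sink i.castSucc - 1, by omega⟩
  have hpows : ∀ v, posVec G i.castSucc - posVec G v =
      r ^ (dist G.e G.path_to_sink v) - r ^ (m+1) := by
    intro v
    simp only [posVec, ← hr, hm]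
    ring
  -- split off js
  rw [← Finset.add_sum_erase Finset.univ _ (Finset.mem_univ js)]
  have hterm1 : r ^ m - r ^ (m+1) ≤ (G.e i.castSucc js : ℚ) * (posVec G i.castSucc - posVec G js) := by
    rw [hpows]
    have hdj : dist G.e G.path_to_sink js ≤ m := by omega
    have h1 : r ^ m ≤ r ^ (dist G.e G.path_to_sink js) :=
      pow_le_pow_of_le_one (le_of_lt hrpos) (le_of_lt (r_lt_one G)) hdj
    have h2 : (1:ℚ) ≤ (G.e i.castSucc js : ℚ) := by exact_mod_cast hjs1
    have h3 : r ^ (m+1) ≤ r ^ m := by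
      have := pow_le_pow_of_le_one (le_of_lt hrpos) (le_of_lt (r_lt_one G)) (Nat.le_succ m)
      exact this
    nlinarith
  have hterm2 : -((totE G : ℚ) * r ^ (m+1)) ≤
      ∑ v ∈ Finset.univ.erase js, (G.e i.castSucc v : ℚ) * (posVec G i.castSucc - posVec G v) := by
    have hstep : ∀ v ∈ Finset.univ.erase js,
        -((G.e i.castSucc v : ℚ) * r ^ (m+1)) ≤
          (G.e i.castSucc v : ℚ) * (posVec G i.castSucc - posVec G v) := by
      intro v _
      rw [hpows]
      have h1 : (0:ℚ) ≤ (G.e i.castSucc v : ℚ) := Nat.cast_nonneg _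
      have h2 : 0 < r ^ (dist G.e G.path_to_sink v) := pow_pos hrpos _
      nlinarith
    have hle : ∑ v ∈ Finset.univ.erase js, (G.e i.castSucc v : ℚ) ≤ (totE G : ℚ) := by
      have h1 : ∑ v ∈ Finset.univ.erase js, G.e i.castSucc v ≤ ∑ v, G.e i.castSucc v :=
        Finset.sum_le_sum_of_subset (Finset.erase_subset _ _)
      have h2 := row_le_totE G i.castSucc
      exact_mod_cast h1.trans h2
    have h3 : 0 < r ^ (m+1) := pow_pos hrpos _
    calc -((totE G : ℚ) * r ^ (m+1))
        ≤ ∑ v ∈ Finset.univ.erase js, -((G.e i.castSucc v : ℚ) * r ^ (m+1)) := by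
          rw [Finset.sum_neg_distrib, ← Finset.sum_mul]
          nlinarith
      _ ≤ _ := Finset.sum_le_sum hstep
  have hrm : 0 < r ^ m := pow_pos hrpos _
  have hkey : (totE G : ℚ) * r ^ (m+1) + r ^ (m+1) < r ^ m := by
    have hpow : r ^ (m+1) = r ^ m * r := pow_succ r m
    have hEr : ((totE G : ℚ) + 1) * r < 1 := by
      rw [hr]
      rw [mul_inv_lt_iff₀ (by positivity)]
      have : (0:ℚ) ≤ (totE G : ℚ) := Nat.cast_nonneg _
      linarith
    nlinarith
  linarith

end RedLapAux

open RedLapAux in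
theorem redLap_nonsingular_inv_nonneg (n : ℕ) (G : SinkDigraph n) :
    (G.redLapQ).det ≠ 0 ∧ ∀ i j, 0 ≤ (G.redLapQ)⁻¹ i j := by
  classical
  set M := G.redLapQ with hM
  have hoff : ∀ i j, i ≠ j → M i j ≤ 0 := fun i j h => redLapQ_offdiag_nonpos G i j h
  set x : Fin n → ℚ := fun j => posVec G j.castSucc with hx
  have hxpos : ∀ i, 0 < x i := fun i => posVec_pos G i
  have hMx : ∀ i, 0 < (M *ᵥ x) i := fun i => mulVec_posVec_pos G i
  have hdet : M.det ≠ 0 := by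
    intro h
    obtain ⟨v, hv0, hv⟩ := Matrix.exists_mulVec_eq_zero_iff.2 h
    have h1 : ∀ i, 0 ≤ v i :=
      mmatrix_nonneg M hoff x hxpos hMx v 0 hv (fun i => le_refl 0)
    have h2 : ∀ i, 0 ≤ (-v) i := by
      apply mmatrix_nonneg M hoff x hxpos hMx (-v) 0 _ (fun i => le_refl 0)
      rw [Matrix.mulVec_neg, hv, neg_zero]
    apply hv0
    funext i
    have := h1 i
    have := h2 i
    simp only [Pi.neg_apply, Pi.zero_apply] at *
    linarith
  refine ⟨hdet, fun i j => ?_⟩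
  have hinv : M * M⁻¹ = 1 := Matrix.mul_nonsing_inv M (isUnit_iff_ne_zero.2 hdet)
  have hyb : M *ᵥ (fun k => M⁻¹ k j) = fun k => (1 : Matrix (Fin n) (Fin n) ℚ) k j := by
    funext k
    rw [Matrix.mulVec, dotProduct, ← Matrix.mul_apply, hinv]
  exact mmatrix_nonneg M hoff x hxpos hMx _ _ hyb
    (fun k => by rw [Matrix.one_apply]; split <;> norm_num) i
end

section
/- Let a be a stable configuration and σ ∈ N^n a script such that a + σΔ is non-negative. If τ is the firing script of the stabilization of a + σΔ, then τ ⪯ σ (componentwise). -/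
open SinkDigraph Matrix

lemma script_le_budget (n : ℕ) (G : SinkDigraph n) (a : Fin n → ℤ)
    (ha : G.IsStable a) :
    ∀ s : List (Fin n), ∀ c : Fin n → ℤ, 0 ≤ c →
      G.Legal (a + Matrix.vecMul c G.redLap) s → script s ≤ c := by
  intro s
  induction s with
  | nil =>
    intro c hc _ i
    simpa [script] using hc i
  | cons i t ih =>
    intro c hc hleg
    obtain ⟨hact, hlegt⟩ := hleg
    have hdiag : ∀ j, G.redLap j j = (G.outDeg j.castSucc : ℤ) := by
      intro j; simp [SinkDigraph.redLap, SinkDigraph.lap]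
    have hoff : ∀ j k : Fin n, j ≠ k → G.redLap j k = -(G.e j.castSucc k.castSucc : ℤ) := by
      intro j k hjk
      simp [SinkDigraph.redLap, SinkDigraph.lap, Fin.castSucc_inj, hjk]
    have hci : 1 ≤ c i := by
      by_contra h
      push_neg at h
      have hci0 : c i = 0 := le_antisymm (by omega) (hc i)
      have hsum : Matrix.vecMul c G.redLap i ≤ 0 := by
        rw [Matrix.vecMul]
        apply Finset.sum_nonpos
        intro j _
        rcases eq_or_ne j i with rfl | hji
        · simp [hci0]
        · show c j * G.redLap j i ≤ 0
          rw [hoff j i hji]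
          exact mul_nonpos_of_nonneg_of_nonpos (hc j) (neg_nonpos.mpr (by positivity))
      have := (ha i).2
      rw [hdiag i] at this
      have hact' := hact
      rw [hdiag i] at hact'
      simp only [Pi.add_apply] at hact'
      omega
    have hfire : G.fire (a + Matrix.vecMul c G.redLap) i
        = a + Matrix.vecMul (c - Pi.single i 1) G.redLap := by
      funext j
      simp only [SinkDigraph.fire, Pi.add_apply, Matrix.vecMul, dotProduct,
        Pi.sub_apply, sub_mul, Finset.sum_sub_distrib, Pi.single_apply, ite_mul, one_mul,
        zero_mul, Finset.sum_ite_eq, Finset.sum_ite_eq', Finset.mem_univ, if_true]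
      ring
    have hc' : 0 ≤ c - Pi.single i 1 := by
      intro j
      rcases eq_or_ne j i with rfl | hji
      · simpa using hci
      · simpa [Pi.single_apply, hji] using hc j
    have hle := ih (c - Pi.single i 1) hc' (by rwa [hfire] at hlegt)
    intro j
    have hj := hle j
    simp only [script, Pi.sub_apply, Pi.single_apply] at hj
    simp only [script, List.count_cons]
    push_cast
    rcases eq_or_ne j i with rfl | hji
    · simp only [if_pos rfl, if_true] at hj
      simp only [beq_self_eq_true, if_true]
      omega
    · rw [if_neg hji] at hj
      have hbe : (i == j) = false := beq_false_of_ne (Ne.symm hji)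
      simp [hbe]
      omega

theorem stabilization_script_le (n : ℕ) (G : SinkDigraph n) (a : Fin n → ℤ)
    (σ : Fin n → ℕ) (ha : G.IsStable a)
    (hnn : 0 ≤ a + Matrix.vecMul (natScript σ) G.redLap)
    (s : List (Fin n))
    (hleg : G.Legal (a + Matrix.vecMul (natScript σ) G.redLap) s)
    (hst : G.IsStable (G.applySeq (a + Matrix.vecMul (natScript σ) G.redLap) s)) :
    script s ≤ natScript σ :=
  script_le_budget n G a ha s (natScript σ) (fun i => Int.ofNat_nonneg _) hleg
end

section
/- Let σ be a G-positive script and let a, b be stable configurations with b = (a + σΔ)°. Then the total weight satisfies w(b) ≥ w(a). -/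
open SinkDigraph Matrix

/-!
If the legal sequence stabilizing `a + σΔ` has script `c`, the least action principle gives
`c ≤ σ`, because firing `σ` from `a + σΔ` already reaches the stable `a`. Hence
`b = a + (σ - c)Δ` with `σ - c ≥ 0`, and un-firing a non-negative script can only pull chips
back from the sink, so `w(b) ≥ w(a)`.
-/

namespace SinkDigraph

variable {n : ℕ} (G : SinkDigraph n)

lemma redLap_apply_nonpos_of_ne {i j : Fin n} (h : i ≠ j) : G.redLap i j ≤ 0 := by
  simp [redLap, lap, Fin.castSucc_inj, h]

lemma sum_redLap_row (i : Fin n) : ∑ j, G.redLap i j = G.e i.castSucc (Fin.last n) := by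
  have hrow : ∀ j, G.redLap i j =
      (if i = j then (G.outDeg i.castSucc : ℤ) else 0) - G.e i.castSucc j.castSucc := by
    intro j
    rcases eq_or_ne i j with rfl | h
    · simp [redLap, lap, G.loopless]
    · simp [redLap, lap, Fin.castSucc_inj, h]
  simp only [hrow, Finset.sum_sub_distrib, Finset.sum_ite_eq, Finset.mem_univ, if_true, outDeg,
    Fin.sum_univ_castSucc]
  push_cast
  ring

/-- Firing conserves chips except those sent to the sink. -/
lemma weight_vecMul_redLap (v : Fin n → ℤ) :
    weight (v ᵥ* G.redLap) = ∑ i, v i * G.e i.castSucc (Fin.last n) := by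
  simp only [weight, vecMul, dotProduct]
  rw [Finset.sum_comm]
  simp only [← Finset.mul_sum, sum_redLap_row]

lemma weight_vecMul_redLap_nonneg {v : Fin n → ℤ} (hv : 0 ≤ v) :
    0 ≤ weight (v ᵥ* G.redLap) := by
  rw [weight_vecMul_redLap]
  exact Finset.sum_nonneg fun i _ => mul_nonneg (hv i) (Int.natCast_nonneg _)

lemma weight_add (a b : Fin n → ℤ) : weight (a + b) = weight a + weight b :=
  Finset.sum_add_distrib

lemma script_nil : script ([] : List (Fin n)) = 0 := rfl

lemma script_cons (i : Fin n) (s : List (Fin n)) :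
    script (i :: s) = script s + Pi.single i 1 := by
  funext k
  rcases eq_or_ne k i with rfl | hk
  · simp [script]
  · simp [script, hk, Ne.symm hk]

lemma fire_eq (a : Fin n → ℤ) (i : Fin n) : G.fire a i = a - G.redLap i := rfl

lemma applySeq_eq (a : Fin n → ℤ) (s : List (Fin n)) :
    G.applySeq a s = a - script s ᵥ* G.redLap := by
  induction s generalizing a with
  | nil => simp [applySeq, script_nil]
  | cons i s ih =>
    rw [applySeq, ih, fire_eq, script_cons, add_vecMul, single_one_vecMul, row_def]
    abel

lemma vecMul_redLap_apply_nonpos {τ : Fin n → ℤ} (hτ : 0 ≤ τ) {i : Fin n} (hi : τ i = 0) :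
    (τ ᵥ* G.redLap) i ≤ 0 := by
  simp only [vecMul, dotProduct]
  refine Finset.sum_nonpos fun k _ => ?_
  rcases eq_or_ne k i with rfl | hk
  · simp [hi]
  · exact mul_nonpos_of_nonneg_of_nonpos (hτ k) (G.redLap_apply_nonpos_of_ne hk)

/-- Least action principle. -/
theorem script_le_of_legal {x : Fin n → ℤ} {s : List (Fin n)} (hs : G.Legal x s)
    {τ : Fin n → ℤ} (hτ : 0 ≤ τ) (hstab : ∀ i, (x - τ ᵥ* G.redLap) i < G.redLap i i) :
    script s ≤ τ := by
  induction s generalizing x τ with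
  | nil => simpa [script_nil] using hτ
  | cons i s ih =>
    obtain ⟨hactive, hs⟩ := hs
    -- If `τ` did not fire the active vertex `i`, then `i` could only gain chips and stay active.
    have hτi : 1 ≤ τ i := by
      by_contra! h
      have hgain := G.vecMul_redLap_apply_nonpos hτ (le_antisymm (by omega : τ i ≤ 0) (hτ i))
      have hi := hstab i
      simp only [Pi.sub_apply] at hi
      omega
    set τ' := τ - Pi.single i 1
    have hτ' : 0 ≤ τ' := by
      refine sub_nonneg.mpr fun k => ?_
      rcases eq_or_ne k i with rfl | hk
      · simpa using hτi
      · simpa [hk] using hτ k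
    have hsame : G.fire x i - τ' ᵥ* G.redLap = x - τ ᵥ* G.redLap := by
      rw [fire_eq, sub_vecMul, single_one_vecMul, row_def]
      abel
    rw [script_cons]
    exact le_sub_iff_add_le.mp (ih hs hτ' (hsame ▸ hstab))

end SinkDigraph

theorem weight_nondecreasing_general (n : ℕ) (G : SinkDigraph n) (σ : Fin n → ℕ)
    (a b : Fin n → ℤ) (ha : G.IsStable a)
    (hb : G.Stabilizes (a + Matrix.vecMul (natScript σ) G.redLap) b) :
    weight a ≤ weight b := by
  obtain ⟨s, hlegal, rfl, -⟩ := hb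
  have hle : script s ≤ natScript σ :=
    G.script_le_of_legal hlegal (fun i => Int.natCast_nonneg _) (fun i => by simpa using (ha i).2)
  have hfinal : G.applySeq (a + natScript σ ᵥ* G.redLap) s =
      a + (natScript σ - script s) ᵥ* G.redLap := by
    rw [G.applySeq_eq, sub_vecMul]
    abel
  rw [hfinal, weight_add, le_add_iff_nonneg_right]
  exact G.weight_vecMul_redLap_nonneg (sub_nonneg.mpr hle)

theorem weight_nondecreasing (n : ℕ) (G : SinkDigraph n) (σ : Fin n → ℕ)
    (hσ : G.GPositive σ) (a b : Fin n → ℤ) (ha : G.IsStable a)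
    (hb : G.Stabilizes (a + Matrix.vecMul (natScript σ) G.redLap) b) :
    weight a ≤ weight b :=
  weight_nondecreasing_general n G σ a b ha hb
end

section
/- If a is a critical configuration, then for every script τ ≻ 0 (τ ∈ N^n, τ ≠ 0), the configuration a + τΔ is not stable. -/
open SinkDigraph Matrix

namespace SinkDigraph
variable {n : ℕ}

lemma vecMul_apply' (v : Fin n → ℤ) (M : Matrix (Fin n) (Fin n) ℤ) (j : Fin n) :
    Matrix.vecMul v M j = ∑ i, v i * M i j := rfl

lemma redLap_apply (G : SinkDigraph n) (i j : Fin n) :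
    G.redLap i j = if i = j then (G.outDeg i.castSucc : ℤ) else -(G.e i.castSucc j.castSucc : ℤ) := by
  simp [redLap, lap, Fin.castSucc_inj]

lemma script_cons_s10 (i : Fin n) (t : List (Fin n)) :
    script (i :: t) = fun j => script t j + (if i = j then 1 else 0) := by
  funext j
  simp only [script, List.count_cons]
  by_cases h : i = j <;> simp [h]

lemma applySeq_sub (G : SinkDigraph n) (x : Fin n → ℤ) (s : List (Fin n)) :
    G.applySeq x s = x - Matrix.vecMul (script s) G.redLap := by
  induction s generalizing x with
  | nil => funext j; simp [applySeq, script, vecMul_apply']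
  | cons i t ih =>
    funext j
    rw [applySeq, ih]
    simp only [Pi.sub_apply, fire, vecMul_apply', script_cons_s10]
    rw [Finset.sum_congr rfl (fun k _ => add_mul (script t k) _ (G.redLap k j)),
      Finset.sum_add_distrib]
    have : ∑ k, (if i = k then (1:ℤ) else 0) * G.redLap k j = G.redLap i j := by
      simp [ite_mul]
    rw [this]; ring

lemma legal_mono (G : SinkDigraph n) {x y : Fin n → ℤ} (h : ∀ j, x j ≤ y j) :
    ∀ s : List (Fin n), G.Legal x s → G.Legal y s := by
  intro s
  induction s generalizing x y with
  | nil => intro; trivial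
  | cons i t ih =>
    rintro ⟨h1, h2⟩
    exact ⟨le_trans h1 (h i), ih (fun j => by simp only [fire]; exact sub_le_sub_right (h j) _) h2⟩

lemma applySeq_append (G : SinkDigraph n) (x : Fin n → ℤ) (s t : List (Fin n)) :
    G.applySeq x (s ++ t) = G.applySeq (G.applySeq x s) t := by
  induction s generalizing x with
  | nil => simp [applySeq]
  | cons i u ih => simp [applySeq, ih]

lemma legal_append (G : SinkDigraph n) (x : Fin n → ℤ) (s t : List (Fin n))
    (hs : G.Legal x s) (ht : G.Legal (G.applySeq x s) t) : G.Legal x (s ++ t) := by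
  induction s generalizing x with
  | nil => exact ht
  | cons i u ih => exact ⟨hs.1, ih _ hs.2 ht⟩

/-- `k` concatenated copies of `s`. -/
def rep (s : List (Fin n)) : ℕ → List (Fin n)
  | 0 => []
  | k + 1 => s ++ rep s k

lemma count_rep (s : List (Fin n)) (k : ℕ) (i : Fin n) :
    (rep s k).count i = k * s.count i := by
  induction k with
  | zero => simp [rep]
  | succ m ih => simp [rep, List.count_append, ih]; ring

lemma rep_legal (G : SinkDigraph n) (x : Fin n → ℤ) (s : List (Fin n))
    (hleg : G.Legal x s) (d : Fin n → ℤ) (hd : d = Matrix.vecMul (script s) G.redLap)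
    (hd0 : ∀ j, 0 ≤ d j) :
    ∀ k : ℕ, G.Legal (fun j => x j + k * d j) (rep s (k + 1)) := by
  intro k
  induction k with
  | zero =>
    have : G.Legal (fun j => x j + ((0:ℕ):ℤ) * d j) s := by
      refine G.legal_mono (fun j => ?_) s hleg
      simp
    exact G.legal_append _ s (rep s 0) this trivial
  | succ m ih =>
    refine G.legal_append _ s (rep s (m + 1)) ?_ ?_
    · refine G.legal_mono (fun j => ?_) s hleg
      have : (0:ℤ) ≤ ((m + 1 : ℕ):ℤ) * d j := mul_nonneg (by positivity) (hd0 j)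
      linarith
    · have happ : G.applySeq (fun j => x j + ((m+1 : ℕ) : ℤ) * d j) s
          = fun j => x j + ((m : ℕ):ℤ) * d j := by
        rw [applySeq_sub]
        funext j
        simp only [Pi.sub_apply, ← hd]
        push_cast
        ring
      rw [happ]
      exact ih

/-- Least action principle. -/
lemma least_action (G : SinkDigraph n) :
    ∀ (s : List (Fin n)) (x : Fin n → ℤ) (ψ : Fin n → ℕ),
      G.Legal x s → G.IsStable (x - Matrix.vecMul (natScript ψ) G.redLap) →
      ∀ i, s.count i ≤ ψ i := by
  intro s
  induction s with
  | nil => intro x ψ _ _ i; simp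
  | cons i t ih =>
    intro x ψ hleg hstab
    have hxi : G.redLap i i ≤ x i := hleg.1
    have hψi : 1 ≤ ψ i := by
      by_contra h
      have hψ0 : ψ i = 0 := by omega
      have h1 := (hstab i).2
      simp only [Pi.sub_apply, vecMul_apply'] at h1
      have hle : ∑ j, natScript ψ j * G.redLap j i ≤ 0 := by
        apply Finset.sum_nonpos
        intro j _
        rcases eq_or_ne j i with rfl | hji
        · simp [natScript, hψ0]
        · rw [redLap_apply]
          simp only [if_neg hji]
          have h2 : (0:ℤ) ≤ natScript ψ j := by simp [natScript]
          have h3 : (0:ℤ) ≤ (G.e j.castSucc i.castSucc : ℤ) := by positivity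
          nlinarith
      linarith
    set ψ' : Fin n → ℕ := fun j => ψ j - (if j = i then 1 else 0) with hψ'
    have hkey : G.fire x i - Matrix.vecMul (natScript ψ') G.redLap
        = x - Matrix.vecMul (natScript ψ) G.redLap := by
      funext j
      simp only [Pi.sub_apply, fire, vecMul_apply', natScript, hψ']
      have hterm : ∀ k : Fin n, ((ψ k - (if k = i then 1 else 0) : ℕ) : ℤ) * G.redLap k j
          = (ψ k : ℤ) * G.redLap k j - (if k = i then (1:ℤ) else 0) * G.redLap k j := by
        intro k
        rcases eq_or_ne k i with rfl | hk
        · rw [Nat.cast_sub (by simpa using hψi)]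
          push_cast
          ring
        · simp [hk]
      rw [Finset.sum_congr rfl (fun k _ => hterm k), Finset.sum_sub_distrib]
      have : ∑ k, (if k = i then (1:ℤ) else 0) * G.redLap k j = G.redLap i j := by
        simp
      rw [this]
      ring
    have hrec := ih (G.fire x i) ψ' hleg.2 (by rw [hkey]; exact hstab)
    intro j
    have hj2 := hrec j
    simp only [hψ'] at hj2
    rw [List.count_cons]
    rcases eq_or_ne j i with rfl | hj
    · simp at hj2 ⊢
      omega
    · simp only [if_neg hj] at hj2
      have : (i == j) = false := beq_false_of_ne (Ne.symm hj)
      simp [this]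
      omega

end SinkDigraph

theorem critical_no_stable_reverse (n : ℕ) (G : SinkDigraph n) (a : Fin n → ℤ)
    (ha : G.IsCritical a) (τ : Fin n → ℕ) (hτ : τ ≠ 0) :
    ¬ G.IsStable (a + Matrix.vecMul (natScript τ) G.redLap) := by
  intro hb
  obtain ⟨c, hc, s, hleg, happ, hstab⟩ := ha
  set σ : Fin n → ℕ := fun i => s.count i with hσ
  have hscript : script s = natScript σ := rfl
  set d : Fin n → ℤ := Matrix.vecMul (natScript σ) G.redLap with hd
  have hda : G.cmax + c - d = a := by
    rw [hd, ← hscript, ← G.applySeq_sub]; exact happ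
  have ha_eq : ∀ i, a i = G.cmax i + c i - d i := by
    intro i
    have h := congrFun hda i
    simpa using h.symm
  have hdiag : ∀ i : Fin n, G.redLap i i = (G.outDeg i.castSucc : ℤ) := by
    intro i; rw [redLap_apply]; simp
  have hstab_le : ∀ i, a i ≤ G.cmax i := by
    intro i
    have h1 := (hstab i).2
    rw [hdiag i] at h1
    simp only [cmax]
    linarith
  have hc' : ∀ i, 0 ≤ c i := fun i => by simpa using hc i
  have hd0 : ∀ i, 0 ≤ d i := by
    intro i
    have h1 := ha_eq i
    have h2 := hstab_le i
    have h3 := hc' i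
    linarith
  -- classification of non-firing vertices
  have hzero : ∀ i, σ i = 0 → c i = 0 ∧ a i = G.cmax i ∧
      ∀ j, (σ j : ℤ) * (G.e j.castSucc i.castSucc : ℤ) = 0 := by
    intro i hσi
    have hdi : d i = ∑ j, -((σ j : ℤ) * (G.e j.castSucc i.castSucc : ℤ)) := by
      rw [hd, vecMul_apply']
      apply Finset.sum_congr rfl
      intro j _
      rcases eq_or_ne j i with rfl | hj
      · simp [natScript, hσi, G.loopless]
      · rw [redLap_apply, if_neg hj]
        simp [natScript]
    rw [Finset.sum_neg_distrib] at hdi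
    have hnn : ∀ j ∈ Finset.univ, (0:ℤ) ≤ (σ j : ℤ) * (G.e j.castSucc i.castSucc : ℤ) :=
      fun j _ => by positivity
    have hsum_nn : (0:ℤ) ≤ ∑ j, (σ j : ℤ) * (G.e j.castSucc i.castSucc : ℤ) :=
      Finset.sum_nonneg hnn
    have h1 := ha_eq i
    have h2 := hstab_le i
    have h3 := hc' i
    have hsum0 : ∑ j, (σ j : ℤ) * (G.e j.castSucc i.castSucc : ℤ) = 0 := by linarith
    refine ⟨by linarith, by linarith, ?_⟩
    exact fun j => (Finset.sum_eq_zero_iff_of_nonneg hnn).mp hsum0 j (Finset.mem_univ j)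
  -- Step 1: supp τ ⊆ supp σ
  have hsupp : ∀ i, τ i ≠ 0 → σ i ≠ 0 := by
    by_contra hcon
    push_neg at hcon
    obtain ⟨i0, hτ0, hσ0⟩ := hcon
    set V : Finset (Fin n) := Finset.univ.filter (fun i => τ i ≠ 0 ∧ σ i = 0) with hV
    have hi0V : i0 ∈ V := by simp [hV, hτ0, hσ0]
    have hτΔ : ∀ i ∈ V, Matrix.vecMul (natScript τ) G.redLap i ≤ 0 := by
      intro i hiV
      obtain ⟨hτi, hσi⟩ : τ i ≠ 0 ∧ σ i = 0 := by simpa [hV] using hiV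
      have hb2 := (hb i).2
      simp only [Pi.add_apply] at hb2
      rw [(hzero i hσi).2.1, hdiag i] at hb2
      simp only [cmax] at hb2
      linarith
    have hsum0 : ∑ i ∈ V, Matrix.vecMul (natScript τ) G.redLap i ≤ 0 :=
      Finset.sum_nonpos hτΔ
    have hswap : ∑ i ∈ V, Matrix.vecMul (natScript τ) G.redLap i
        = ∑ j, (τ j : ℤ) * (∑ i ∈ V, G.redLap j i) := by
      simp only [vecMul_apply', natScript]
      rw [Finset.sum_comm]
      exact Finset.sum_congr rfl fun j _ => (Finset.mul_sum _ _ _).symm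
    have houter : ∀ j, j ∉ V → (τ j : ℤ) * (∑ i ∈ V, G.redLap j i) = 0 := by
      intro j hjV
      rcases Nat.eq_zero_or_pos (τ j) with h0 | hpos
      · simp [h0]
      · have hσj : σ j ≠ 0 := by
          intro h
          refine hjV ?_
          simp only [hV, Finset.mem_filter, Finset.mem_univ, true_and]
          exact ⟨by omega, h⟩
        have hz : ∑ i ∈ V, G.redLap j i = 0 := by
          apply Finset.sum_eq_zero
          intro i hiV
          obtain ⟨hτi, hσi⟩ : τ i ≠ 0 ∧ σ i = 0 := by simpa [hV] using hiV
          have hji : j ≠ i := fun h => hσj (h ▸ hσi)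
          have he := (hzero i hσi).2.2 j
          have he0 : (G.e j.castSucc i.castSucc : ℤ) = 0 := by
            rcases mul_eq_zero.mp he with h | h
            · exact absurd (by exact_mod_cast h) hσj
            · exact h
          rw [redLap_apply, if_neg hji, he0, neg_zero]
        simp [hz]
    have hVsum : ∑ j, (τ j : ℤ) * (∑ i ∈ V, G.redLap j i)
        = ∑ j ∈ V, (τ j : ℤ) * (∑ i ∈ V, G.redLap j i) :=
      (Finset.sum_subset (Finset.subset_univ V) (fun j _ hj => houter j hj)).symm
    have hinner : ∀ j ∈ V, ∑ i ∈ V, G.redLap j i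
        = ∑ k ∈ Finset.univ \ V.image Fin.castSucc, (G.e j.castSucc k : ℤ) := by
      intro j hjV
      have hterm : ∀ i, G.redLap j i
          = (if i = j then (G.outDeg j.castSucc : ℤ) else 0)
            - (G.e j.castSucc i.castSucc : ℤ) := by
        intro i
        rw [redLap_apply]
        rcases eq_or_ne j i with rfl | hji
        · simp [G.loopless]
        · simp [hji, Ne.symm hji]
      rw [Finset.sum_congr rfl (fun i _ => hterm i), Finset.sum_sub_distrib,
        Finset.sum_ite_eq' V j, if_pos hjV]
      have houtdeg : (G.outDeg j.castSucc : ℤ) = ∑ k, (G.e j.castSucc k : ℤ) := by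
        simp [outDeg]
      have himg : ∑ k ∈ V.image Fin.castSucc, (G.e j.castSucc k : ℤ)
          = ∑ i ∈ V, (G.e j.castSucc i.castSucc : ℤ) := by
        apply Finset.sum_image
        intro x _ y _ h
        exact Fin.castSucc_injective n h
      rw [houtdeg, ← himg, ← Finset.sum_sdiff (Finset.subset_univ (V.image Fin.castSucc))]
      ring
    have hnn : ∀ j ∈ V, (0:ℤ) ≤ (τ j : ℤ) * (∑ i ∈ V, G.redLap j i) := by
      intro j hjV
      rw [hinner j hjV]
      exact mul_nonneg (by positivity) (Finset.sum_nonneg fun k _ => by positivity)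
    have hsum : ∑ j ∈ V, (τ j : ℤ) * (∑ i ∈ V, G.redLap j i) ≤ 0 := by
      rw [← hVsum, ← hswap]; exact hsum0
    have hz := (Finset.sum_eq_zero_iff_of_nonneg hnn).mp
      (le_antisymm hsum (Finset.sum_nonneg hnn))
    have hkey : ∀ j ∈ V, ∀ k, k ∉ V.image Fin.castSucc → G.e j.castSucc k = 0 := by
      intro j hjV k hk
      have hzj := hz j hjV
      rw [hinner j hjV] at hzj
      have hτj : τ j ≠ 0 := by
        have := Finset.mem_filter.mp hjV
        exact this.2.1
      have hz2 : ∑ k' ∈ Finset.univ \ V.image Fin.castSucc, (G.e j.castSucc k' : ℤ) = 0 := by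
        rcases mul_eq_zero.mp hzj with h | h
        · exact absurd (by exact_mod_cast h) hτj
        · exact h
      have := (Finset.sum_eq_zero_iff_of_nonneg (fun k' _ => by positivity)).mp hz2 k
        (Finset.mem_sdiff.mpr ⟨Finset.mem_univ k, hk⟩)
      exact_mod_cast this
    have hclosed : ∀ u v, u ∈ V.image Fin.castSucc → 0 < G.e u v →
        v ∈ V.image Fin.castSucc := by
      intro u v hu huv
      obtain ⟨j, hjV, rfl⟩ := Finset.mem_image.mp hu
      by_contra hv
      rw [hkey j hjV v hv] at huv
      exact lt_irrefl 0 huv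
    have hreach : ∀ u v, Relation.ReflTransGen (fun p q => 0 < G.e p q) u v →
        u ∈ V.image Fin.castSucc → v ∈ V.image Fin.castSucc := by
      intro u v h
      induction h with
      | refl => exact id
      | tail h1 h2 ih => exact fun hu => hclosed _ _ (ih hu) h2
    have hlast := hreach _ _ (G.path_to_sink i0.castSucc)
      (Finset.mem_image.mpr ⟨i0, hi0V, rfl⟩)
    obtain ⟨j, _, hj⟩ := Finset.mem_image.mp hlast
    exact absurd hj (Fin.castSucc_lt_last j).ne
  -- Step 2: least action principle
  set K : ℕ := ∑ i, τ i with hK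
  have hK1 : 1 ≤ K := by
    rcases Function.ne_iff.mp hτ with ⟨i, hi⟩
    have hi' : τ i ≠ 0 := by simpa using hi
    calc 1 ≤ τ i := Nat.one_le_iff_ne_zero.mpr hi'
    _ ≤ K := Finset.single_le_sum (fun _ _ => Nat.zero_le _) (Finset.mem_univ i)
  have hτK : ∀ i, τ i ≤ K * σ i := by
    intro i
    rcases Nat.eq_zero_or_pos (τ i) with h0 | hpos
    · simp [h0]
    · have hσi : 1 ≤ σ i := Nat.one_le_iff_ne_zero.mpr (hsupp i (by omega))
      calc τ i ≤ K := Finset.single_le_sum (fun _ _ => Nat.zero_le _) (Finset.mem_univ i)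
      _ = K * 1 := (mul_one K).symm
      _ ≤ K * σ i := Nat.mul_le_mul_left K hσi
  set ψ : Fin n → ℕ := fun i => K * σ i - τ i with hψ
  have hd' : d = Matrix.vecMul (script s) G.redLap := by rw [hd, hscript]
  have hlegK := G.rep_legal (G.cmax + c) s hleg d hd' hd0 (K - 1)
  have hstabx : G.IsStable ((fun j => (G.cmax + c) j + ((K - 1 : ℕ) : ℤ) * d j)
      - Matrix.vecMul (natScript ψ) G.redLap) := by
    have hxb : (fun j => (G.cmax + c) j + ((K - 1 : ℕ) : ℤ) * d j)
        - Matrix.vecMul (natScript ψ) G.redLap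
        = a + Matrix.vecMul (natScript τ) G.redLap := by
      funext j
      simp only [Pi.sub_apply, Pi.add_apply, vecMul_apply', natScript, hψ]
      have hdj : d j = ∑ k, (σ k : ℤ) * G.redLap k j := by
        rw [hd, vecMul_apply']; rfl
      have hsplit : ∑ k, ((K * σ k - τ k : ℕ) : ℤ) * G.redLap k j
          = (K:ℤ) * (∑ k, (σ k : ℤ) * G.redLap k j) - ∑ k, (τ k : ℤ) * G.redLap k j := by
        rw [Finset.mul_sum, ← Finset.sum_sub_distrib]
        apply Finset.sum_congr rfl
        intro k _
        rw [Nat.cast_sub (hτK k)]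
        push_cast
        ring
      rw [hsplit, ← hdj, ha_eq j, Nat.cast_sub hK1]
      push_cast
      ring
    rw [hxb]
    exact hb
  have hcount := G.least_action (rep s ((K - 1) + 1)) _ ψ hlegK hstabx
  have hfin : ∀ i, K * σ i ≤ ψ i := by
    intro i
    have h1 := hcount i
    rw [count_rep] at h1
    have hKK : K - 1 + 1 = K := by omega
    rw [hKK] at h1
    exact h1
  apply hτ
  funext i
  have h1 := hfin i
  have h2 := hτK i
  simp only [hψ] at h1
  show τ i = 0
  generalize hM : K * σ i = M at h1 h2
  omega
end
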